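/- The numbers t_{2n,0,j} satisfy the symmetry t_{2n,0,j} = t_{2n,0,2n-j} for 1 ≤ j ≤ 2n-1, and t_{2n,0,j} = t_{2n-1,0,j-1}; moreover t_{2n,0,0} = 0 and t_{2n-1,0,0} = 1. -/

import Mathlib

/-!
The derivation `D` commutes with the automorphism exchanging `y` and `z`, so every `D^n(w)` is
symmetric in `y` and `z`; this gives `t_{2n,0,j} = t_{2n,0,2n-j}`.

Among the rules, only `x → yz` lowers the degree in `x`. Hence the coefficient of
`w y^(b+1) z^(c+1)` in `D p` is the coefficient of `w x y^b z^c` in `p`, which is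
`t_{2n,0,j} = t_{2n-1,0,j-1}`, and `w z^c` never occurs in `D p`, which is `t_{2n,0,0} = 0`.
The coefficient of `w x z^(c+1)` in `D p` collects `w z^(c+1)` (via `w → wx`) and `w y z^c`
(via `y → xz`); by the two previous facts this gives
`t_{2m+1,0,0} = t_{2m-1,0,0} = ⋯ = t_{1,0,0} = 1`.
-/

open MvPolynomial Finset

/-- The derivation for the grammar `G = {w → wx, x → yz, y → xz, z → xy}` on `ℚ[w,x,y,z]`
(`w = X 0`, `x = X 1`, `y = X 2`, `z = X 3`). -/
noncomputable def Dg : Derivation ℚ (MvPolynomial (Fin 4) ℚ) (MvPolynomial (Fin 4) ℚ) :=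
  MvPolynomial.mkDerivation ℚ ![X 0 * X 1, X 2 * X 3, X 1 * X 3, X 1 * X 2]

/-- `tC n i j` is the coefficient `t_{n,i,j}` of `D^n(w)`:
for even `n`, the coefficient of `w x^(2i) y^j z^(n-2i-j)`;
for odd `n`, the coefficient of `w x^(2i+1) y^j z^(n-1-2i-j)`.
Coefficients with negative indices are `0`. -/
noncomputable def tC (n : ℕ) (i j : ℤ) : ℚ :=
  if 0 ≤ i ∧ 0 ≤ j then
    MvPolynomial.coeff
      (Finsupp.single 0 1
        + Finsupp.single 1 ((if Even n then 2*i else 2*i+1).toNat)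
        + Finsupp.single 2 j.toNat
        + Finsupp.single 3 (((n:ℤ) - 2*i - j - if Even n then 0 else 1).toNat))
      ((fun p => Dg p)^[n] (X 0))
  else 0

namespace MvPolynomial

variable {σ R : Type*} [CommSemiring R]

theorem derivation_eq_sum_mul_pderiv [Fintype σ]
    (D : Derivation R (MvPolynomial σ R) (MvPolynomial σ R)) (p : MvPolynomial σ R) :
    D p = ∑ i, D (X i) * pderiv i p := by
  classical
  have sum_apply (q : MvPolynomial σ R) :
      (∑ i, D (X i) • pderiv i) q = ∑ i, D (X i) * pderiv i q := by
    rw [← Derivation.coeFnAddMonoidHom_apply, map_sum, Finset.sum_apply]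
    rfl
  have hD : D = ∑ i, D (X i) • pderiv i :=
    derivation_ext fun j => by simp [sum_apply, pderiv_X, Pi.single_apply]
  conv_lhs => rw [hD]
  exact sum_apply p

theorem coeff_X_mul_X_mul_add (m : σ →₀ ℕ) (a b : σ) (p : MvPolynomial σ R) :
    coeff (m + Finsupp.single a 1 + Finsupp.single b 1) (X a * X b * p) = coeff m p := by
  rw [mul_comm, ← mul_assoc, coeff_mul_X, coeff_mul_X]

theorem coeff_X_mul_X_mul_eq_zero {m : σ →₀ ℕ} {a b : σ} (h : m a = 0 ∨ m b = 0)
    (p : MvPolynomial σ R) : coeff m (X a * X b * p) = 0 := by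
  classical
  rcases h with h | h
  · rw [mul_assoc, coeff_X_mul', if_neg (by simpa using h)]
  · rw [mul_comm (X a), mul_assoc, coeff_X_mul', if_neg (by simpa using h)]

end MvPolynomial

/-- The exponent of the monomial `w x^a y^b z^c`. -/
noncomputable def wxyz (a b c : ℕ) : Fin 4 →₀ ℕ :=
  Finsupp.single 0 1 + Finsupp.single 1 a + Finsupp.single 2 b + Finsupp.single 3 c

theorem Dg_apply (p : MvPolynomial (Fin 4) ℚ) :
    Dg p = X 0 * X 1 * pderiv 0 p + X 2 * X 3 * pderiv 1 p
      + X 1 * X 3 * pderiv 2 p + X 1 * X 2 * pderiv 3 p := by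
  rw [derivation_eq_sum_mul_pderiv, Fin.sum_univ_four]
  simp [Dg, mkDerivation_X]

theorem coeff_Dg_wxyz_zero_succ_succ (p : MvPolynomial (Fin 4) ℚ) (b c : ℕ) :
    coeff (wxyz 0 (b + 1) (c + 1)) (Dg p) = coeff (wxyz 1 b c) p := by
  have hm : wxyz 0 (b + 1) (c + 1) = wxyz 0 b c + Finsupp.single 2 1 + Finsupp.single 3 1 := by
    simp only [wxyz, Finsupp.single_add]; abel
  have hx : wxyz 0 b c + Finsupp.single 1 1 = wxyz 1 b c := by
    simp only [wxyz, Finsupp.single_zero, add_zero]; abel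
  rw [Dg_apply]
  simp (disch := simp [wxyz]) only [coeff_add, coeff_X_mul_X_mul_eq_zero, zero_add, add_zero]
  rw [hm, coeff_X_mul_X_mul_add, coeff_pderiv, hx]
  simp [wxyz]

theorem coeff_Dg_wxyz_zero_zero (p : MvPolynomial (Fin 4) ℚ) (c : ℕ) :
    coeff (wxyz 0 0 c) (Dg p) = 0 := by
  rw [Dg_apply]
  simp (disch := simp [wxyz]) only [coeff_add, coeff_X_mul_X_mul_eq_zero, add_zero]

theorem coeff_Dg_wxyz_one_zero_succ (p : MvPolynomial (Fin 4) ℚ) (c : ℕ) :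
    coeff (wxyz 1 0 (c + 1)) (Dg p) = coeff (wxyz 0 0 (c + 1)) p + coeff (wxyz 0 1 c) p := by
  have hw :
      wxyz 1 0 (c + 1) = Finsupp.single 3 (c + 1) + Finsupp.single 0 1 + Finsupp.single 1 1 := by
    simp only [wxyz, Finsupp.single_zero, add_zero]; abel
  have hw' : Finsupp.single 3 (c + 1) + Finsupp.single 0 1 = wxyz 0 0 (c + 1) := by
    simp only [wxyz, Finsupp.single_zero, add_zero]; abel
  have hy : wxyz 1 0 (c + 1) = wxyz 0 0 c + Finsupp.single 1 1 + Finsupp.single 3 1 := by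
    simp only [wxyz, Finsupp.single_zero, add_zero, Finsupp.single_add]; abel
  have hy' : wxyz 0 0 c + Finsupp.single 2 1 = wxyz 0 1 c := by
    simp only [wxyz, Finsupp.single_zero, add_zero]; abel
  rw [Dg_apply]
  simp (disch := simp [wxyz]) only [coeff_add, coeff_X_mul_X_mul_eq_zero, add_zero]
  congr 1
  · rw [hw, coeff_X_mul_X_mul_add, coeff_pderiv, hw']
    simp
  · rw [hy, coeff_X_mul_X_mul_add, coeff_pderiv, hy']
    simp [wxyz]

noncomputable def Dw (n : ℕ) : MvPolynomial (Fin 4) ℚ := (fun p => Dg p)^[n] (X 0)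

theorem Dw_succ (n : ℕ) : Dw (n + 1) = Dg (Dw n) := Function.iterate_succ_apply' _ _ _

theorem rename_swap_Dg (p : MvPolynomial (Fin 4) ℚ) :
    rename (Equiv.swap 2 3) (Dg p) = Dg (rename (Equiv.swap 2 3) p) := by
  induction p using MvPolynomial.induction_on with
  | C a => simp [Dg]
  | add p q hp hq => simp only [map_add, hp, hq]
  | mul_X p i hp =>
    have hX : rename (Equiv.swap 2 3) (Dg (X i)) = Dg (X (Equiv.swap 2 3 i)) := by
      fin_cases i <;> simp [Dg, Equiv.swap_apply_def, mkDerivation_X, mul_comm]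
    simp only [Derivation.leibniz, smul_eq_mul, map_add, map_mul, rename_X, hX, hp]

theorem rename_swap_Dw (n : ℕ) : rename (Equiv.swap 2 3) (Dw n) = Dw n := by
  induction n with
  | zero => simp [Dw, Equiv.swap_apply_of_ne_of_ne]
  | succ n ih => rw [Dw_succ, rename_swap_Dg, ih]

theorem coeff_Dw_wxyz_comm (n a b c : ℕ) :
    coeff (wxyz a b c) (Dw n) = coeff (wxyz a c b) (Dw n) := by
  rw [← coeff_rename_mapDomain _ (Equiv.swap 2 3).injective, rename_swap_Dw]
  congr 1
  simp only [wxyz, Finsupp.mapDomain_add, Finsupp.mapDomain_single]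
  simp [Equiv.swap_apply_of_ne_of_ne]
  abel

theorem coeff_Dw_wxyz_one_zero (m : ℕ) : coeff (wxyz 1 0 (2 * m)) (Dw (2 * m + 1)) = 1 := by
  induction m with
  | zero => simp [Dw, Dg, mkDerivation_X, wxyz]
  | succ m ih =>
    rw [show 2 * (m + 1) = 2 * m + 1 + 1 by ring, Dw_succ, coeff_Dg_wxyz_one_zero_succ, Dw_succ,
      coeff_Dg_wxyz_zero_zero, coeff_Dg_wxyz_zero_succ_succ, zero_add, ih]

theorem tC_two_mul_zero (n j : ℕ) (hj : j ≤ 2 * n) :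
    tC (2 * n) 0 j = coeff (wxyz 0 j (2 * n - j)) (Dw (2 * n)) := by
  have hz : ((2 * n : ℕ) - 2 * 0 - (j : ℤ) - 0).toNat = 2 * n - j := by omega
  rw [tC, if_pos ⟨le_rfl, j.cast_nonneg⟩, if_pos (even_two_mul n), if_pos (even_two_mul n), hz]
  simp [wxyz, Dw]

theorem tC_two_mul_add_one_zero (n j : ℕ) (hj : j ≤ 2 * n) :
    tC (2 * n + 1) 0 j = coeff (wxyz 1 j (2 * n - j)) (Dw (2 * n + 1)) := by
  have hz : ((2 * n + 1 : ℕ) - 2 * 0 - (j : ℤ) - 1).toNat = 2 * n - j := by omega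
  rw [tC, if_pos ⟨le_rfl, j.cast_nonneg⟩, if_neg (Nat.not_even_two_mul_add_one n),
    if_neg (Nat.not_even_two_mul_add_one n), hz]
  simp [wxyz, Dw]

theorem stmt16 (n : ℕ) (hn : 1 ≤ n) :
    (∀ j : ℕ, 1 ≤ j → j ≤ 2*n-1 →
      tC (2*n) 0 (j:ℤ) = tC (2*n) 0 ((2*n : ℕ) - (j:ℤ)) ∧
      tC (2*n) 0 (j:ℤ) = tC (2*n-1) 0 ((j:ℤ)-1)) ∧
    tC (2*n) 0 0 = 0 ∧ tC (2*n-1) 0 0 = 1 := by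
  obtain ⟨m, rfl⟩ : ∃ m, n = m + 1 := ⟨n - 1, by omega⟩
  have hodd : 2 * (m + 1) - 1 = 2 * m + 1 := by omega
  have hDw : Dw (2 * (m + 1)) = Dg (Dw (2 * m + 1)) := Dw_succ _
  refine ⟨fun j hj1 hj2 => ⟨?_, ?_⟩, ?_, ?_⟩
  · rw [show ((2 * (m + 1) : ℕ) : ℤ) - j = ((2 * (m + 1) - j : ℕ) : ℤ) by omega,
      tC_two_mul_zero _ _ (by omega), tC_two_mul_zero _ _ (by omega), Nat.sub_sub_self (by omega)]
    exact coeff_Dw_wxyz_comm _ _ _ _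
  · obtain ⟨i, rfl⟩ : ∃ i, j = i + 1 := ⟨j - 1, by omega⟩
    rw [hodd, show ((i + 1 : ℕ) : ℤ) - 1 = i by omega, tC_two_mul_add_one_zero _ _ (by omega),
      tC_two_mul_zero _ _ (by omega), show 2 * (m + 1) - (i + 1) = 2 * m - i + 1 by omega, hDw,
      coeff_Dg_wxyz_zero_succ_succ]
  · have h := tC_two_mul_zero (m + 1) 0 (Nat.zero_le _)
    rw [Nat.cast_zero, Nat.sub_zero, hDw, coeff_Dg_wxyz_zero_zero] at h
    exact h
  · have h := tC_two_mul_add_one_zero m 0 (Nat.zero_le _)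
    rw [Nat.cast_zero, Nat.sub_zero, coeff_Dw_wxyz_one_zero] at h
    rw [hodd, h]
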